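/- arXiv:2412.19805 — 8 statements merged into one kernel-verified Lean document; each statement's English description precedes it below -/
import Mathlib

section
/- If R is a concrete branching reactive bisimulation, R(P,X,Q), P has no outgoing tau-transition, and Q ==> Q' (a finite sequence of tau-transitions), then R(P,X,Q'). -/
inductive Act (A : Type) where
  | vis (a : A)
  | tau
  | to

def TauPath {S A : Type} (Tr : S → Act A → S → Prop) : S → S → Prop :=
  Relation.ReflTransGen (fun p q => Tr p Act.tau q)

def OptStep {S A : Type} (Tr : S → Act A → S → Prop) (α : Act A) (p q : S) : Prop :=
  (α = Act.tau ∧ p = q) ∨ Tr p α q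

def Stable {S A : Type} (Tr : S → Act A → S → Prop) (p : S) : Prop :=
  ¬ ∃ p', Tr p Act.tau p'

def Idle {S A : Type} (Tr : S → Act A → S → Prop) (p : S) (X : Set A) : Prop :=
  Stable Tr p ∧ ∀ a ∈ X, ¬ ∃ p', Tr p (Act.vis a) p'

def InitSet {S A : Type} (Tr : S → Act A → S → Prop) (p : S) : Set (Act A) :=
  {α | α ≠ Act.to ∧ ∃ p', Tr p α p'}

structure CBRB {S A : Type} (Tr : S → Act A → S → Prop)
    (Rp : S → S → Prop) (Rt : S → Set A → S → Prop) : Prop where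
  symm_p : ∀ {P Q}, Rp P Q → Rp Q P
  symm_t : ∀ {P X Q}, Rt P X Q → Rt Q X P
  c1a : ∀ {P Q α P'}, Rp P Q → α ≠ Act.to → Tr P α P' →
    ∃ Q1 Q2, TauPath Tr Q Q1 ∧ OptStep Tr α Q1 Q2 ∧ Rp P Q1 ∧ Rp P' Q2
  c1b : ∀ {P Q} (Y : Set A), Rp P Q → Rt P Y Q
  c2a : ∀ {P X Q P'}, Rt P X Q → Tr P Act.tau P' →
    ∃ Q1 Q2, TauPath Tr Q Q1 ∧ OptStep Tr Act.tau Q1 Q2 ∧ Rt P X Q1 ∧ Rt P' X Q2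
  c2b : ∀ {P X Q a P'}, Rt P X Q → a ∈ X → Tr P (Act.vis a) P' →
    ∃ Q1 Q2, TauPath Tr Q Q1 ∧ Tr Q1 (Act.vis a) Q2 ∧ Rt P X Q1 ∧ Rp P' Q2
  c2c : ∀ {P X Q}, Rt P X Q → Idle Tr P X → ∃ Q0, TauPath Tr Q Q0 ∧ Rp P Q0
  c2d : ∀ {P X Q P'}, Rt P X Q → Idle Tr P X → Tr P Act.to P' →
    ∃ Q1 Q2, TauPath Tr Q Q1 ∧ Tr Q1 Act.to Q2 ∧ Rt P' X Q2
  c2e : ∀ {P X Q}, Rt P X Q → Stable Tr P → ∃ Q0, TauPath Tr Q Q0 ∧ Stable Tr Q0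

def Bis {S A : Type} (Tr : S → Act A → S → Prop) (P Q : S) : Prop :=
  ∃ Rp Rt, CBRB Tr Rp Rt ∧ Rp P Q

def BisX {S A : Type} (Tr : S → Act A → S → Prop) (P : S) (X : Set A) (Q : S) : Prop :=
  ∃ Rp Rt, CBRB Tr Rp Rt ∧ Rt P X Q

theorem Stable.eq_of_tauPath {S A : Type} {Tr : S → Act A → S → Prop} {p q : S}
    (hp : Stable Tr p) (h : TauPath Tr p q) : q = p := by
  rcases h.cases_head with rfl | ⟨r, hpr, -⟩
  · rfl
  · exact absurd ⟨r, hpr⟩ hp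

theorem Stable.eq_of_optStep_tau {S A : Type} {Tr : S → Act A → S → Prop} {p q : S}
    (hp : Stable Tr p) (h : OptStep Tr Act.tau p q) : q = p := by
  rcases h with ⟨-, rfl⟩ | hpq
  · rfl
  · exact absurd ⟨q, hpq⟩ hp

-- Clause (2a) applied to `R(Q,X,P)`: a stable `P` can only answer the tau-step of `Q` by idling.
theorem CBRB.rt_of_tau_of_stable {S A : Type} {Tr : S → Act A → S → Prop}
    {Rp : S → S → Prop} {Rt : S → Set A → S → Prop} (h : CBRB Tr Rp Rt)
    {P Q Q' : S} {X : Set A} (hR : Rt P X Q) (hP : Stable Tr P) (hQ : Tr Q Act.tau Q') :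
    Rt P X Q' := by
  obtain ⟨P1, P2, hPP1, hP1P2, -, hR'⟩ := h.c2a (h.symm_t hR) hQ
  obtain rfl : P1 = P := hP.eq_of_tauPath hPP1
  obtain rfl : P2 = P1 := hP.eq_of_optStep_tau hP1P2
  exact h.symm_t hR'

/-- If `R` is a concrete branching reactive bisimulation, `R(P,X,Q)`, `P` has no outgoing
tau-transition, and `Q ==> Q'`, then `R(P,X,Q')`. -/
theorem stmt0 {C A : Type} (Tr : C → Act A → C → Prop)
    (Rp : C → C → Prop) (Rt : C → Set A → C → Prop)
    (h : CBRB Tr Rp Rt) (P : C) (X : Set A) (Q Q' : C)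
    (hR : Rt P X Q) (hP : Stable Tr P) (hQ : TauPath Tr Q Q') :
    Rt P X Q' := by
  induction hQ with
  | refl => exact hR
  | tail _ hstep ih => exact h.rt_of_tau_of_stable ih hP hstep
end

section
/- If R is a concrete branching reactive bisimulation with R(P,X,Q) and I(P) ∩ (X ∪ {tau}) = ∅, then there is a path Q ==> Q0 such that R(P,Q0), Q0 has no outgoing tau-transition, and I(Q0) = I(P). -/
/-! A stable state admits no proper τ-path, so every matching move answered from a stable state
is answered by a single transition. Clause (2c) turns `R(P,X,Q)` into `R(P,Q1)` for some
`Q ==> Q1`, and clause (2e), applied to the triple `R(P,∅,Q1)`, continues to a stable `Q0`;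
clause (1a) keeps `P` related to every τ-descendant of `Q1` because `P` cannot move silently, and
between two related stable states it transfers every initial action other than a time-out. -/

lemma TauPath.eq_of_stable {C A : Type} {Tr : C → Act A → C → Prop} {p q : C}
    (hp : Stable Tr p) (hpq : TauPath Tr p q) : p = q := by
  rcases hpq.cases_head with h | ⟨c, hc, _⟩
  · exact h
  · exact absurd ⟨c, hc⟩ hp

namespace CBRB

variable {C A : Type} {Tr : C → Act A → C → Prop}
  {Rp : C → C → Prop} {Rt : C → Set A → C → Prop}

lemma rp_of_tauPath (h : CBRB Tr Rp Rt) {P Q Q' : C} (hP : Stable Tr P)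
    (hPQ : Rp P Q) (hQQ' : TauPath Tr Q Q') : Rp P Q' := by
  induction hQQ' with
  | refl => exact hPQ
  | tail _ hstep ih =>
    obtain ⟨P1, P2, hPP1, hP1P2, -, hP2⟩ := h.c1a (h.symm_p ih) (by simp) hstep
    obtain rfl := hPP1.eq_of_stable hP
    rcases hP1P2 with ⟨-, rfl⟩ | hmove
    · exact h.symm_p hP2
    · exact absurd ⟨P2, hmove⟩ hP

lemma initSet_subset (h : CBRB Tr Rp Rt) {P Q : C} (hPQ : Rp P Q)
    (hP : Stable Tr P) (hQ : Stable Tr Q) : InitSet Tr P ⊆ InitSet Tr Q := by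
  rintro α ⟨hα, P', hmove⟩
  have hα_tau : α ≠ Act.tau := by
    rintro rfl
    exact hP ⟨P', hmove⟩
  obtain ⟨Q1, Q2, hQQ1, hQ1Q2, -, -⟩ := h.c1a hPQ hα hmove
  obtain rfl := hQQ1.eq_of_stable hQ
  rcases hQ1Q2 with ⟨hα', -⟩ | hQmove
  · exact absurd hα' hα_tau
  · exact ⟨hα, Q2, hQmove⟩

lemma initSet_eq (h : CBRB Tr Rp Rt) {P Q : C} (hPQ : Rp P Q)
    (hP : Stable Tr P) (hQ : Stable Tr Q) : InitSet Tr P = InitSet Tr Q :=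
  (h.initSet_subset hPQ hP hQ).antisymm (h.initSet_subset (h.symm_p hPQ) hQ hP)

end CBRB

/-- If `R(P,X,Q)` and `I(P) ∩ (X ∪ {tau}) = ∅`, then there is a path `Q ==> Q0` with
`R(P,Q0)`, `Q0` stable and `I(Q0) = I(P)`. -/
theorem stmt3 {C A : Type} (Tr : C → Act A → C → Prop)
    (Rp : C → C → Prop) (Rt : C → Set A → C → Prop)
    (h : CBRB Tr Rp Rt) (P : C) (X : Set A) (Q : C)
    (hR : Rt P X Q) (hP : Idle Tr P X) :
    ∃ Q0, TauPath Tr Q Q0 ∧ Rp P Q0 ∧ Stable Tr Q0 ∧ InitSet Tr Q0 = InitSet Tr P := by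
  obtain ⟨Q1, hQQ1, hPQ1⟩ := h.c2c hR hP
  obtain ⟨Q0, hQ1Q0, hQ0⟩ := h.c2e (h.c1b ∅ hPQ1) hP.1
  have hPQ0 : Rp P Q0 := h.rp_of_tauPath hP.1 hPQ1 hQ1Q0
  exact ⟨Q0, hQQ1.trans hQ1Q0, hPQ0, hQ0, (h.initSet_eq hPQ0 hP.1 hQ0).symm⟩
end

section
/- Stuttering Lemma: Let P, P†, P‡, Q be processes. If P and P‡ are both concrete branching reactive bisimilar to Q (respectively both concrete branching X-bisimilar to Q) and P -tau-> P† -tau-> P‡, then P† is concrete branching reactive bisimilar to Q (respectively concrete branching X-bisimilar to Q). -/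
/-!
Two states are bisimilar as soon as each of them can silently reach a state bisimilar to the
other: adding such pairs to the largest concrete branching reactive bisimulation keeps every
transfer clause valid, because all clauses allow the matching side to start with a `τ`-path.
In the situation of the lemma, `Q` silently reaches a partner of `P†` (match `P → P†` against
`P ~ Q`) and `P†` silently reaches `P‡ ~ Q`.
-/

section

variable {C A : Type} {Tr : C → Act A → C → Prop}

theorem OptStep.tauPath {q q' : C} (h : OptStep Tr Act.tau q q') : TauPath Tr q q' := by
  rcases h with ⟨_, rfl⟩ | h
  exacts [.refl, .single h]

theorem cbrb_bis : CBRB Tr (Bis Tr) (BisX Tr) where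
  symm_p := fun ⟨Rp, Rt, h, hr⟩ => ⟨Rp, Rt, h, h.symm_p hr⟩
  symm_t := fun ⟨Rp, Rt, h, hr⟩ => ⟨Rp, Rt, h, h.symm_t hr⟩
  c1a := by
    rintro P Q α P' ⟨Rp, Rt, h, hr⟩ hα hP
    obtain ⟨Q1, Q2, hQ1, hQ2, hr1, hr2⟩ := h.c1a hr hα hP
    exact ⟨Q1, Q2, hQ1, hQ2, ⟨Rp, Rt, h, hr1⟩, ⟨Rp, Rt, h, hr2⟩⟩
  c1b := fun Y ⟨Rp, Rt, h, hr⟩ => ⟨Rp, Rt, h, h.c1b Y hr⟩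
  c2a := by
    rintro P X Q P' ⟨Rp, Rt, h, hr⟩ hP
    obtain ⟨Q1, Q2, hQ1, hQ2, hr1, hr2⟩ := h.c2a hr hP
    exact ⟨Q1, Q2, hQ1, hQ2, ⟨Rp, Rt, h, hr1⟩, ⟨Rp, Rt, h, hr2⟩⟩
  c2b := by
    rintro P X Q a P' ⟨Rp, Rt, h, hr⟩ ha hP
    obtain ⟨Q1, Q2, hQ1, hQ2, hr1, hr2⟩ := h.c2b hr ha hP
    exact ⟨Q1, Q2, hQ1, hQ2, ⟨Rp, Rt, h, hr1⟩, ⟨Rp, Rt, h, hr2⟩⟩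
  c2c := by
    rintro P X Q ⟨Rp, Rt, h, hr⟩ hI
    obtain ⟨Q0, hQ0, hr0⟩ := h.c2c hr hI
    exact ⟨Q0, hQ0, ⟨Rp, Rt, h, hr0⟩⟩
  c2d := by
    rintro P X Q P' ⟨Rp, Rt, h, hr⟩ hI hP
    obtain ⟨Q1, Q2, hQ1, hQ2, hr2⟩ := h.c2d hr hI hP
    exact ⟨Q1, Q2, hQ1, hQ2, ⟨Rp, Rt, h, hr2⟩⟩
  c2e := fun ⟨_, _, h, hr⟩ hS => h.c2e hr hS

theorem exists_tauPath_of_sup_flip {R S : C → C → Prop} (hR : ∀ {p q}, R p q → R q p)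
    (hS : ∀ {p q}, S p q → (∃ q', TauPath Tr q q' ∧ R p q') ∧ ∃ p', TauPath Tr p p' ∧ R p' q)
    {p q : C} : (R ⊔ S ⊔ flip S) p q → ∃ q', TauPath Tr q q' ∧ R p q' := by
  rintro ((hr | hs) | hs)
  · exact ⟨q, .refl, hr⟩
  · exact (hS hs).1
  · obtain ⟨q', hq', hr⟩ := (hS hs).2
    exact ⟨q', hq', hR hr⟩

theorem CBRB.sup_of_tauPath {Rp Sp : C → C → Prop} {Rt St : C → Set A → C → Prop}
    (h : CBRB Tr Rp Rt)
    (hSp : ∀ {p q}, Sp p q →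
      (∃ q', TauPath Tr q q' ∧ Rp p q') ∧ ∃ p', TauPath Tr p p' ∧ Rp p' q)
    (hSt : ∀ {p X q}, St p X q →
      (∃ q', TauPath Tr q q' ∧ Rt p X q') ∧ ∃ p', TauPath Tr p p' ∧ Rt p' X q)
    (hSpt : ∀ {p q} (Y : Set A), Sp p q → St p Y q) :
    CBRB Tr (Rp ⊔ Sp ⊔ flip Sp) (Rt ⊔ St ⊔ fun p X q => St q X p) := by
  have reach_p {p q} : (Rp ⊔ Sp ⊔ flip Sp) p q → ∃ q', TauPath Tr q q' ∧ Rp p q' :=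
    exists_tauPath_of_sup_flip h.symm_p hSp
  have reach_t {p X q} : (Rt ⊔ St ⊔ fun p X q => St q X p) p X q →
      ∃ q', TauPath Tr q q' ∧ Rt p X q' :=
    exists_tauPath_of_sup_flip (R := (Rt · X ·)) (S := (St · X ·)) h.symm_t hSt
  refine
    { symm_p := ?_, symm_t := ?_, c1a := ?_, c1b := ?_, c2a := ?_, c2b := ?_, c2c := ?_,
      c2d := ?_, c2e := ?_ }
  · rintro P Q ((hr | hs) | hs)
    exacts [.inl (.inl (h.symm_p hr)), .inr hs, .inl (.inr hs)]
  · rintro P X Q ((hr | hs) | hs)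
    exacts [.inl (.inl (h.symm_t hr)), .inr hs, .inl (.inr hs)]
  · intro P Q α P' hPQ hα hP
    obtain ⟨Q', hQ', hr⟩ := reach_p hPQ
    obtain ⟨Q1, Q2, hQ1, hQ2, hr1, hr2⟩ := h.c1a hr hα hP
    exact ⟨Q1, Q2, hQ'.trans hQ1, hQ2, .inl (.inl hr1), .inl (.inl hr2)⟩
  · rintro P Q Y ((hr | hs) | hs)
    exacts [.inl (.inl (h.c1b Y hr)), .inl (.inr (hSpt Y hs)), .inr (hSpt Y hs)]
  · intro P X Q P' hPQ hP
    obtain ⟨Q', hQ', hr⟩ := reach_t hPQ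
    obtain ⟨Q1, Q2, hQ1, hQ2, hr1, hr2⟩ := h.c2a hr hP
    exact ⟨Q1, Q2, hQ'.trans hQ1, hQ2, .inl (.inl hr1), .inl (.inl hr2)⟩
  · intro P X Q a P' hPQ ha hP
    obtain ⟨Q', hQ', hr⟩ := reach_t hPQ
    obtain ⟨Q1, Q2, hQ1, hQ2, hr1, hr2⟩ := h.c2b hr ha hP
    exact ⟨Q1, Q2, hQ'.trans hQ1, hQ2, .inl (.inl hr1), .inl (.inl hr2)⟩
  · intro P X Q hPQ hI
    obtain ⟨Q', hQ', hr⟩ := reach_t hPQ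
    obtain ⟨Q0, hQ0, hr0⟩ := h.c2c hr hI
    exact ⟨Q0, hQ'.trans hQ0, .inl (.inl hr0)⟩
  · intro P X Q P' hPQ hI hP
    obtain ⟨Q', hQ', hr⟩ := reach_t hPQ
    obtain ⟨Q1, Q2, hQ1, hQ2, hr2⟩ := h.c2d hr hI hP
    exact ⟨Q1, Q2, hQ'.trans hQ1, hQ2, .inl (.inl hr2)⟩
  · intro P X Q hPQ hS
    obtain ⟨Q', hQ', hr⟩ := reach_t hPQ
    obtain ⟨Q0, hQ0, hS0⟩ := h.c2e hr hS
    exact ⟨Q0, hQ'.trans hQ0, hS0⟩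

theorem bis_of_tauPath {p q : C} (hq : ∃ q', TauPath Tr q q' ∧ Bis Tr p q')
    (hp : ∃ p', TauPath Tr p p' ∧ Bis Tr p' q) : Bis Tr p q := by
  refine ⟨_, _, cbrb_bis.sup_of_tauPath (Sp := fun a b => a = p ∧ b = q)
    (St := fun a _ b => a = p ∧ b = q) ?_ ?_ fun _ => id, .inl (.inr ⟨rfl, rfl⟩)⟩
  · rintro _ _ ⟨rfl, rfl⟩
    exact ⟨hq, hp⟩
  · rintro _ Y _ ⟨rfl, rfl⟩
    obtain ⟨q', hq', hpq'⟩ := hq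
    obtain ⟨p', hp', hp'q⟩ := hp
    exact ⟨⟨q', hq', cbrb_bis.c1b Y hpq'⟩, ⟨p', hp', cbrb_bis.c1b Y hp'q⟩⟩

theorem bisX_of_tauPath {p q : C} {X : Set A} (hq : ∃ q', TauPath Tr q q' ∧ BisX Tr p X q')
    (hp : ∃ p', TauPath Tr p p' ∧ BisX Tr p' X q) : BisX Tr p X q := by
  refine ⟨_, _, cbrb_bis.sup_of_tauPath (Sp := fun _ _ => False)
    (St := fun a Y b => a = p ∧ Y = X ∧ b = q) False.elim ?_ fun _ => False.elim,
    .inl (.inr ⟨rfl, rfl, rfl⟩)⟩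
  rintro _ _ _ ⟨rfl, rfl, rfl⟩
  exact ⟨hq, hp⟩

end

/-- Stuttering Lemma. -/
theorem stmt4 {C A : Type} (Tr : C → Act A → C → Prop)
    (P Pd Pdd Q : C)
    (h1 : Tr P Act.tau Pd) (h2 : Tr Pd Act.tau Pdd) :
    (Bis Tr P Q → Bis Tr Pdd Q → Bis Tr Pd Q) ∧
    (∀ X : Set A, BisX Tr P X Q → BisX Tr Pdd X Q → BisX Tr Pd X Q) := by
  refine ⟨fun hPQ hPddQ => bis_of_tauPath ?_ ⟨Pdd, .single h2, hPddQ⟩,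
    fun X hPQ hPddQ => bisX_of_tauPath ?_ ⟨Pdd, .single h2, hPddQ⟩⟩
  · obtain ⟨_, Q2, hQ1, hQ2, -, hPdQ2⟩ := cbrb_bis.c1a hPQ (by simp) h1
    exact ⟨Q2, hQ1.trans hQ2.tauPath, hPdQ2⟩
  · obtain ⟨_, Q2, hQ1, hQ2, -, hPdQ2⟩ := cbrb_bis.c2a hPQ h1
    exact ⟨Q2, hQ1.trans hQ2.tauPath, hPdQ2⟩
end

section
/- Concrete branching reactive bisimilarity ~ and each relation ~_X (for X ⊆ A) are equivalence relations. In particular, if R1 and R2 are concrete branching reactive bisimulations, then the symmetric closure of their relational composition, (R1 ∘ R2) ∪ (R2 ∘ R1), is again a concrete branching reactive bisimulation, where composition is defined componentwise on pairs and on triples with the same environment set X. -/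
/-!
Reflexivity and symmetry are immediate (equality is a bisimulation, and bisimulations are
symmetric), so everything rests on composition. If `P R₁ R` and `R R₂ Q`, a move of `P` is
answered by `R` with a τ-path followed by an optional step; `Q` follows the τ-path (a τ-path is
transferred τ-step by τ-step) and then answers the optional step. The clauses that speak about
idle or stable states, (2c)–(2e), need the intermediate state `R` to be idle or stable as well:
one first moves `R` along a τ-path to an idle (stable) `R'` still related to `P`, using that a
τ-path out of a stable state is trivial.
-/

section

variable {S A : Type} {Tr : S → Act A → S → Prop}

namespace TauPath

lemma of_optStep_tau {p q : S} (h : OptStep Tr Act.tau p q) : TauPath Tr p q := by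
  rcases h with ⟨-, rfl⟩ | h
  · exact Relation.ReflTransGen.refl
  · exact Relation.ReflTransGen.single h

lemma eq_of_stable_s5 {p q : S} (hs : Stable Tr p) (h : TauPath Tr p q) : p = q := by
  rcases h.cases_head with rfl | ⟨r, hr, -⟩
  · rfl
  · exact absurd ⟨r, hr⟩ hs

lemma exists_transfer {r : S → S → Prop}
    (hr : ∀ {P Q P'}, r P Q → Tr P Act.tau P' →
      ∃ Q1 Q2, TauPath Tr Q Q1 ∧ OptStep Tr Act.tau Q1 Q2 ∧ r P' Q2)
    {P Q P' : S} (hpq : r P Q) (hp : TauPath Tr P P') : ∃ Q', TauPath Tr Q Q' ∧ r P' Q' := by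
  induction hp with
  | refl => exact ⟨Q, Relation.ReflTransGen.refl, hpq⟩
  | tail _ hstep ih =>
    obtain ⟨Q1, hQQ1, hr1⟩ := ih
    obtain ⟨Q2, Q3, hQ1Q2, hopt, hr3⟩ := hr hr1 hstep
    exact ⟨Q3, hQQ1.trans (hQ1Q2.trans (of_optStep_tau hopt)), hr3⟩

end TauPath

namespace CBRB

variable {Rp : S → S → Prop} {Rt : S → Set A → S → Prop}

lemma tauPath_transfer (h : CBRB Tr Rp Rt) {P Q P' : S} (hpq : Rp P Q)
    (hp : TauPath Tr P P') : ∃ Q', TauPath Tr Q Q' ∧ Rp P' Q' :=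
  TauPath.exists_transfer (r := Rp) (fun hr hstep => by
    obtain ⟨Q1, Q2, hQ1, hopt, -, hr2⟩ := h.c1a hr (by simp) hstep
    exact ⟨Q1, Q2, hQ1, hopt, hr2⟩) hpq hp

lemma tauPath_transfer_env (h : CBRB Tr Rp Rt) {P Q P' : S} {X : Set A} (hpq : Rt P X Q)
    (hp : TauPath Tr P P') : ∃ Q', TauPath Tr Q Q' ∧ Rt P' X Q' :=
  TauPath.exists_transfer (r := (Rt · X ·)) (fun hr hstep => by
    obtain ⟨Q1, Q2, hQ1, hopt, -, hr2⟩ := h.c2a hr hstep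
    exact ⟨Q1, Q2, hQ1, hopt, hr2⟩) hpq hp

lemma exists_stable_env (h : CBRB Tr Rp Rt) {P Q : S} {X : Set A} (hr : Rt P X Q)
    (hs : Stable Tr P) : ∃ Q', TauPath Tr Q Q' ∧ Rt P X Q' ∧ Stable Tr Q' := by
  obtain ⟨Q0, hQ0, hs0⟩ := h.c2e hr hs
  obtain ⟨P', hP', hr'⟩ := h.tauPath_transfer_env (h.symm_t hr) hQ0
  obtain rfl := TauPath.eq_of_stable_s5 hs hP'
  exact ⟨Q0, hQ0, h.symm_t hr', hs0⟩

lemma exists_idle_env (h : CBRB Tr Rp Rt) {P Q : S} {X : Set A} (hr : Rt P X Q)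
    (hi : Idle Tr P X) : ∃ Q', TauPath Tr Q Q' ∧ Rt P X Q' ∧ Idle Tr Q' X := by
  obtain ⟨Q', hQ', hr', hs'⟩ := h.exists_stable_env hr hi.1
  refine ⟨Q', hQ', hr', hs', ?_⟩
  rintro a ha ⟨Q'', hstep⟩
  obtain ⟨P1, P2, hP1, hstep', -, -⟩ := h.c2b (h.symm_t hr') ha hstep
  obtain rfl := TauPath.eq_of_stable_s5 hi.1 hP1
  exact hi.2 a ha ⟨P2, hstep'⟩

lemma eq : CBRB Tr (Eq : S → S → Prop) (fun P _ Q => P = Q) where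
  symm_p := Eq.symm
  symm_t := Eq.symm
  c1a := by
    rintro P _ α P' rfl - hstep
    exact ⟨P, P', Relation.ReflTransGen.refl, Or.inr hstep, rfl, rfl⟩
  c1b := fun _ h => h
  c2a := by
    rintro P X _ P' rfl hstep
    exact ⟨P, P', Relation.ReflTransGen.refl, Or.inr hstep, rfl, rfl⟩
  c2b := by
    rintro P X _ a P' rfl - hstep
    exact ⟨P, P', Relation.ReflTransGen.refl, hstep, rfl, rfl⟩
  c2c := by
    rintro P X _ rfl -
    exact ⟨P, Relation.ReflTransGen.refl, rfl⟩
  c2d := by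
    rintro P X _ P' rfl - hstep
    exact ⟨P, P', Relation.ReflTransGen.refl, hstep, rfl⟩
  c2e := by
    rintro P X _ rfl hs
    exact ⟨P, Relation.ReflTransGen.refl, hs⟩

section Comp

variable {Rp1 Rp2 : S → S → Prop} {Rt1 Rt2 : S → Set A → S → Prop}
  (h1 : CBRB Tr Rp1 Rt1) (h2 : CBRB Tr Rp2 Rt2)
include h1 h2

lemma comp_c1a {P R Q P' : S} {α : Act A} (hPR : Rp1 P R) (hRQ : Rp2 R Q) (hα : α ≠ Act.to)
    (hstep : Tr P α P') :
    ∃ Q1 Q2, TauPath Tr Q Q1 ∧ OptStep Tr α Q1 Q2 ∧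
      (∃ R, Rp1 P R ∧ Rp2 R Q1) ∧ (∃ R, Rp1 P' R ∧ Rp2 R Q2) := by
  obtain ⟨R1, R2, hR1, hopt, hPR1, hP'R2⟩ := h1.c1a hPR hα hstep
  obtain ⟨Q1, hQ1, hR1Q1⟩ := h2.tauPath_transfer hRQ hR1
  rcases hopt with ⟨hτ, rfl⟩ | hstep'
  · exact ⟨Q1, Q1, hQ1, Or.inl ⟨hτ, rfl⟩, ⟨R1, hPR1, hR1Q1⟩, ⟨R1, hP'R2, hR1Q1⟩⟩
  · obtain ⟨Q2, Q3, hQ2, hopt', hR1Q2, hR2Q3⟩ := h2.c1a hR1Q1 hα hstep'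
    exact ⟨Q2, Q3, hQ1.trans hQ2, hopt', ⟨R1, hPR1, hR1Q2⟩, ⟨R2, hP'R2, hR2Q3⟩⟩

lemma comp_c2a {P R Q P' : S} {X : Set A} (hPR : Rt1 P X R) (hRQ : Rt2 R X Q)
    (hstep : Tr P Act.tau P') :
    ∃ Q1 Q2, TauPath Tr Q Q1 ∧ OptStep Tr Act.tau Q1 Q2 ∧
      (∃ R, Rt1 P X R ∧ Rt2 R X Q1) ∧ (∃ R, Rt1 P' X R ∧ Rt2 R X Q2) := by
  obtain ⟨R1, R2, hR1, hopt, hPR1, hP'R2⟩ := h1.c2a hPR hstep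
  obtain ⟨Q1, hQ1, hR1Q1⟩ := h2.tauPath_transfer_env hRQ hR1
  rcases hopt with ⟨hτ, rfl⟩ | hstep'
  · exact ⟨Q1, Q1, hQ1, Or.inl ⟨hτ, rfl⟩, ⟨R1, hPR1, hR1Q1⟩, ⟨R1, hP'R2, hR1Q1⟩⟩
  · obtain ⟨Q2, Q3, hQ2, hopt', hR1Q2, hR2Q3⟩ := h2.c2a hR1Q1 hstep'
    exact ⟨Q2, Q3, hQ1.trans hQ2, hopt', ⟨R1, hPR1, hR1Q2⟩, ⟨R2, hP'R2, hR2Q3⟩⟩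

lemma comp_c2b {P R Q P' : S} {X : Set A} {a : A} (hPR : Rt1 P X R) (hRQ : Rt2 R X Q)
    (ha : a ∈ X) (hstep : Tr P (Act.vis a) P') :
    ∃ Q1 Q2, TauPath Tr Q Q1 ∧ Tr Q1 (Act.vis a) Q2 ∧
      (∃ R, Rt1 P X R ∧ Rt2 R X Q1) ∧ (∃ R, Rp1 P' R ∧ Rp2 R Q2) := by
  obtain ⟨R1, R2, hR1, hstepR, hPR1, hP'R2⟩ := h1.c2b hPR ha hstep
  obtain ⟨Q1, hQ1, hR1Q1⟩ := h2.tauPath_transfer_env hRQ hR1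
  obtain ⟨Q2, Q3, hQ2, hstepQ, hR1Q2, hR2Q3⟩ := h2.c2b hR1Q1 ha hstepR
  exact ⟨Q2, Q3, hQ1.trans hQ2, hstepQ, ⟨R1, hPR1, hR1Q2⟩, ⟨R2, hP'R2, hR2Q3⟩⟩

lemma comp_c2c {P R Q : S} {X : Set A} (hPR : Rt1 P X R) (hRQ : Rt2 R X Q)
    (hi : Idle Tr P X) : ∃ Q0, TauPath Tr Q Q0 ∧ (∃ R, Rp1 P R ∧ Rp2 R Q0) := by
  obtain ⟨R', hR', hPR', hiR'⟩ := h1.exists_idle_env hPR hi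
  obtain ⟨Q1, hQ1, hR'Q1⟩ := h2.tauPath_transfer_env hRQ hR'
  obtain ⟨R0, hR0, hPR0⟩ := h1.c2c hPR' hi
  obtain rfl := TauPath.eq_of_stable_s5 hiR'.1 hR0
  obtain ⟨Q0, hQ0, hR'Q0⟩ := h2.c2c hR'Q1 hiR'
  exact ⟨Q0, hQ1.trans hQ0, ⟨R', hPR0, hR'Q0⟩⟩

lemma comp_c2d {P R Q P' : S} {X : Set A} (hPR : Rt1 P X R) (hRQ : Rt2 R X Q)
    (hi : Idle Tr P X) (hstep : Tr P Act.to P') :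
    ∃ Q1 Q2, TauPath Tr Q Q1 ∧ Tr Q1 Act.to Q2 ∧ (∃ R, Rt1 P' X R ∧ Rt2 R X Q2) := by
  obtain ⟨R', hR', hPR', hiR'⟩ := h1.exists_idle_env hPR hi
  obtain ⟨Q1, hQ1, hR'Q1⟩ := h2.tauPath_transfer_env hRQ hR'
  obtain ⟨R1, R2, hR1, hstepR, hP'R2⟩ := h1.c2d hPR' hi hstep
  obtain rfl := TauPath.eq_of_stable_s5 hiR'.1 hR1
  obtain ⟨Q2, Q3, hQ2, hstepQ, hR2Q3⟩ := h2.c2d hR'Q1 hiR' hstepR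
  exact ⟨Q2, Q3, hQ1.trans hQ2, hstepQ, ⟨R2, hP'R2, hR2Q3⟩⟩

lemma comp_c2e {P R Q : S} {X : Set A} (hPR : Rt1 P X R) (hRQ : Rt2 R X Q)
    (hs : Stable Tr P) : ∃ Q0, TauPath Tr Q Q0 ∧ Stable Tr Q0 := by
  obtain ⟨R', hR', hPR', hsR'⟩ := h1.exists_stable_env hPR hs
  obtain ⟨Q1, hQ1, hR'Q1⟩ := h2.tauPath_transfer_env hRQ hR'
  obtain ⟨Q0, hQ0, hsQ0⟩ := h2.c2e hR'Q1 hsR'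
  exact ⟨Q0, hQ1.trans hQ0, hsQ0⟩

lemma symmClosure_comp :
    CBRB Tr
      (fun P Q => (∃ R, Rp1 P R ∧ Rp2 R Q) ∨ (∃ R, Rp2 P R ∧ Rp1 R Q))
      (fun P X Q => (∃ R, Rt1 P X R ∧ Rt2 R X Q) ∨ (∃ R, Rt2 P X R ∧ Rt1 R X Q)) where
  symm_p := by
    rintro P Q (⟨R, h, h'⟩ | ⟨R, h, h'⟩)
    · exact Or.inr ⟨R, h2.symm_p h', h1.symm_p h⟩
    · exact Or.inl ⟨R, h1.symm_p h', h2.symm_p h⟩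
  symm_t := by
    rintro P X Q (⟨R, h, h'⟩ | ⟨R, h, h'⟩)
    · exact Or.inr ⟨R, h2.symm_t h', h1.symm_t h⟩
    · exact Or.inl ⟨R, h1.symm_t h', h2.symm_t h⟩
  c1a := by
    rintro P Q α P' (⟨R, h, h'⟩ | ⟨R, h, h'⟩) hα hstep
    · obtain ⟨Q1, Q2, hQ1, hopt, hr1, hr2⟩ := comp_c1a h1 h2 h h' hα hstep
      exact ⟨Q1, Q2, hQ1, hopt, Or.inl hr1, Or.inl hr2⟩
    · obtain ⟨Q1, Q2, hQ1, hopt, hr1, hr2⟩ := comp_c1a h2 h1 h h' hα hstep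
      exact ⟨Q1, Q2, hQ1, hopt, Or.inr hr1, Or.inr hr2⟩
  c1b := by
    rintro P Q Y (⟨R, h, h'⟩ | ⟨R, h, h'⟩)
    · exact Or.inl ⟨R, h1.c1b Y h, h2.c1b Y h'⟩
    · exact Or.inr ⟨R, h2.c1b Y h, h1.c1b Y h'⟩
  c2a := by
    rintro P X Q P' (⟨R, h, h'⟩ | ⟨R, h, h'⟩) hstep
    · obtain ⟨Q1, Q2, hQ1, hopt, hr1, hr2⟩ := comp_c2a h1 h2 h h' hstep
      exact ⟨Q1, Q2, hQ1, hopt, Or.inl hr1, Or.inl hr2⟩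
    · obtain ⟨Q1, Q2, hQ1, hopt, hr1, hr2⟩ := comp_c2a h2 h1 h h' hstep
      exact ⟨Q1, Q2, hQ1, hopt, Or.inr hr1, Or.inr hr2⟩
  c2b := by
    rintro P X Q a P' (⟨R, h, h'⟩ | ⟨R, h, h'⟩) ha hstep
    · obtain ⟨Q1, Q2, hQ1, hstepQ, hr1, hr2⟩ := comp_c2b h1 h2 h h' ha hstep
      exact ⟨Q1, Q2, hQ1, hstepQ, Or.inl hr1, Or.inl hr2⟩
    · obtain ⟨Q1, Q2, hQ1, hstepQ, hr1, hr2⟩ := comp_c2b h2 h1 h h' ha hstep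
      exact ⟨Q1, Q2, hQ1, hstepQ, Or.inr hr1, Or.inr hr2⟩
  c2c := by
    rintro P X Q (⟨R, h, h'⟩ | ⟨R, h, h'⟩) hi
    · obtain ⟨Q0, hQ0, hr⟩ := comp_c2c h1 h2 h h' hi
      exact ⟨Q0, hQ0, Or.inl hr⟩
    · obtain ⟨Q0, hQ0, hr⟩ := comp_c2c h2 h1 h h' hi
      exact ⟨Q0, hQ0, Or.inr hr⟩
  c2d := by
    rintro P X Q P' (⟨R, h, h'⟩ | ⟨R, h, h'⟩) hi hstep
    · obtain ⟨Q1, Q2, hQ1, hstepQ, hr⟩ := comp_c2d h1 h2 h h' hi hstep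
      exact ⟨Q1, Q2, hQ1, hstepQ, Or.inl hr⟩
    · obtain ⟨Q1, Q2, hQ1, hstepQ, hr⟩ := comp_c2d h2 h1 h h' hi hstep
      exact ⟨Q1, Q2, hQ1, hstepQ, Or.inr hr⟩
  c2e := by
    rintro P X Q (⟨R, h, h'⟩ | ⟨R, h, h'⟩) hs
    · exact comp_c2e h1 h2 h h' hs
    · exact comp_c2e h2 h1 h h' hs

end Comp

end CBRB

lemma bis_equivalence : Equivalence (Bis Tr) where
  refl _ := ⟨Eq, _, CBRB.eq, rfl⟩
  symm := fun ⟨_, _, h, hpq⟩ => ⟨_, _, h, h.symm_p hpq⟩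
  trans := fun ⟨_, _, h1, hPR⟩ ⟨_, _, h2, hRQ⟩ =>
    ⟨_, _, h1.symmClosure_comp h2, Or.inl ⟨_, hPR, hRQ⟩⟩

lemma bisX_equivalence (X : Set A) : Equivalence (fun P Q : S => BisX Tr P X Q) where
  refl _ := ⟨Eq, _, CBRB.eq, rfl⟩
  symm := fun ⟨_, _, h, hpq⟩ => ⟨_, _, h, h.symm_t hpq⟩
  trans := fun ⟨_, _, h1, hPR⟩ ⟨_, _, h2, hRQ⟩ =>
    ⟨_, _, h1.symmClosure_comp h2, Or.inl ⟨_, hPR, hRQ⟩⟩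

end

/-- Concrete branching reactive bisimilarity and each `~_X` are equivalence relations; the
symmetric closure of the composition of two concrete branching reactive bisimulations is again
a concrete branching reactive bisimulation. -/
theorem stmt5 {C A : Type} (Tr : C → Act A → C → Prop) :
    Equivalence (Bis Tr) ∧
    (∀ X : Set A, Equivalence (fun P Q : C => BisX Tr P X Q)) ∧
    (∀ (Rp1 Rp2 : C → C → Prop) (Rt1 Rt2 : C → Set A → C → Prop),
      CBRB Tr Rp1 Rt1 → CBRB Tr Rp2 Rt2 →
      CBRB Tr
        (fun P Q => (∃ R, Rp1 P R ∧ Rp2 R Q) ∨ (∃ R, Rp2 P R ∧ Rp1 R Q))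
        (fun P X Q => (∃ R, Rt1 P X R ∧ Rt2 R X Q) ∨ (∃ R, Rt2 P X R ∧ Rt1 R X Q))) :=
  ⟨bis_equivalence, bisX_equivalence, fun _ _ _ _ h1 h2 => h1.symmClosure_comp h2⟩
end

section
/- Bisimulation up to strong bisimilarity is sound: P is concrete branching reactive bisimilar to Q if and only if there exists a concrete branching time-out bisimulation B up to strong bisimilarity with P B Q. In particular, if B is a concrete branching time-out bisimulation up to strong bisimilarity, then the composition ~strong ∘ B ∘ ~strong is a concrete branching time-out bisimulation. -/
/-- Semantics of the environment operator `θ_X`: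
`θ_X(P) -tau-> θ_X(P')` iff `P -tau-> P'`; `θ_X(P) -a-> P'` iff `P -a-> P'` and `a ∈ X`;
`θ_X(P) -α-> P'` iff `P -α-> P'` and `I(P) ∩ (X ∪ {tau}) = ∅`. -/
def ThetaSem {C A : Type} (Tr : C → Act A → C → Prop) (theta : Set A → C → C) : Prop :=
  ∀ (X : Set A) (P : C) (α : Act A) (Q' : C),
    Tr (theta X P) α Q' ↔
      ((α = Act.tau ∧ ∃ P', Tr P Act.tau P' ∧ Q' = theta X P') ∨
       (∃ a, α = Act.vis a ∧ a ∈ X ∧ Tr P α Q') ∨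
       (Idle Tr P X ∧ Tr P α Q'))

/-- A strong bisimulation, treating all actions (including `tau` and `t`) alike. -/
def StrongB {S A : Type} (Tr : S → Act A → S → Prop) (R : S → S → Prop) : Prop :=
  (∀ {p q}, R p q → R q p) ∧
  (∀ {p q α p'}, R p q → Tr p α p' → ∃ q', Tr q α q' ∧ R p' q')

/-- Strong bisimilarity. -/
def sbis {S A : Type} (Tr : S → Act A → S → Prop) (p q : S) : Prop :=
  ∃ R, StrongB Tr R ∧ R p q

/-- A concrete branching time-out bisimulation (relative to the environment operator `theta`). -/
def CBTB {S A : Type} (Tr : S → Act A → S → Prop) (theta : Set A → S → S)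
    (B : S → S → Prop) : Prop :=
  (∀ {p q}, B p q → B q p) ∧
  (∀ {p q α p'}, B p q → α ≠ Act.to → Tr p α p' →
     ∃ q1 q2, TauPath Tr q q1 ∧ OptStep Tr α q1 q2 ∧ B p q1 ∧ B p' q2) ∧
  (∀ {p q} (X : Set A), ∀ {p'}, B p q → Idle Tr p X → Tr p Act.to p' →
     ∃ q1 q2, TauPath Tr q q1 ∧ Tr q1 Act.to q2 ∧ B (theta X p') (theta X q2)) ∧
  (∀ {p q}, B p q → Stable Tr p → ∃ q0, TauPath Tr q q0 ∧ Stable Tr q0)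

/-- The composition `~strong ∘ B ∘ ~strong`. -/
def UpToS {S A : Type} (Tr : S → Act A → S → Prop) (B : S → S → Prop) (p q : S) : Prop :=
  ∃ p' q', sbis Tr p p' ∧ B p' q' ∧ sbis Tr q' q

/-- A concrete branching time-out bisimulation up to strong bisimilarity. -/
def CBTBuptoS {S A : Type} (Tr : S → Act A → S → Prop) (theta : Set A → S → S)
    (B : S → S → Prop) : Prop :=
  (∀ {p q}, B p q → B q p) ∧
  (∀ {p q α p'}, B p q → α ≠ Act.to → Tr p α p' →
     ∃ q1 q2, TauPath Tr q q1 ∧ OptStep Tr α q1 q2 ∧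
       UpToS Tr B p q1 ∧ UpToS Tr B p' q2) ∧
  (∀ {p q} (X : Set A), ∀ {p'}, B p q → Idle Tr p X → Tr p Act.to p' →
     ∃ q1 q2, TauPath Tr q q1 ∧ Tr q1 Act.to q2 ∧
       UpToS Tr B (theta X p') (theta X q2)) ∧
  (∀ {p q}, B p q → Stable Tr p → ∃ q0, TauPath Tr q q0 ∧ Stable Tr q0)

/-- Concrete branching reactive bisimilarity, characterised via concrete branching
time-out bisimulations. -/
def BisT {S A : Type} (Tr : S → Act A → S → Prop) (theta : Set A → S → S) (p q : S) : Prop :=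
  ∃ B, CBTB Tr theta B ∧ B p q

/-!
Strong bisimilarity is an equivalence that transfers single transitions, τ-paths, stability and
idleness, and it is a congruence for `θ_X`. Hence every transfer obligation of `~ ∘ B ∘ ~` can be
pushed through the outer `~`-steps to an obligation of `B`, answered there up to `~`, and pulled
back; the extra `~`-steps are then absorbed by transitivity. Conversely a plain time-out
bisimulation is one up to `~`, since `~` is reflexive.
-/

section StrongBisimilarity

variable {S A : Type} {Tr : S → Act A → S → Prop}

theorem sbis.refl (p : S) : sbis Tr p p :=
  ⟨Eq, ⟨fun h => h.symm, fun h ht => ⟨_, h ▸ ht, rfl⟩⟩, rfl⟩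

theorem sbis.symm {p q : S} (h : sbis Tr p q) : sbis Tr q p := by
  obtain ⟨R, hR, hpq⟩ := h
  exact ⟨R, hR, hR.1 hpq⟩

theorem sbis.exists_step {p q p' : S} {α : Act A} (h : sbis Tr p q) (hp : Tr p α p') :
    ∃ q', Tr q α q' ∧ sbis Tr p' q' := by
  obtain ⟨R, hR, hpq⟩ := h
  obtain ⟨q', hq, hR'⟩ := hR.2 hpq hp
  exact ⟨q', hq, R, hR, hR'⟩

theorem sbis.trans {p q r : S} (hpq : sbis Tr p q) (hqr : sbis Tr q r) : sbis Tr p r := by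
  refine ⟨Relation.Comp (sbis Tr) (sbis Tr), ⟨?_, ?_⟩, q, hpq, hqr⟩
  · rintro a c ⟨b, hab, hbc⟩
    exact ⟨b, hbc.symm, hab.symm⟩
  · rintro a c α a' ⟨b, hab, hbc⟩ ha
    obtain ⟨b', hb, hab'⟩ := hab.exists_step ha
    obtain ⟨c', hc, hbc'⟩ := hbc.exists_step hb
    exact ⟨c', hc, b', hab', hbc'⟩

theorem sbis.exists_tauPath {p q p' : S} (h : sbis Tr p q) (hp : TauPath Tr p p') :
    ∃ q', TauPath Tr q q' ∧ sbis Tr p' q' := by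
  induction hp with
  | refl => exact ⟨q, .refl, h⟩
  | tail _ hstep ih =>
      obtain ⟨q', hq, hs⟩ := ih
      obtain ⟨q'', hq', hs'⟩ := hs.exists_step hstep
      exact ⟨q'', hq.tail hq', hs'⟩

theorem sbis.stable {p q : S} (h : sbis Tr p q) (hp : Stable Tr p) : Stable Tr q := by
  rintro ⟨q', hq⟩
  obtain ⟨p', hp', -⟩ := h.symm.exists_step hq
  exact hp ⟨p', hp'⟩

theorem sbis.idle {p q : S} {X : Set A} (h : sbis Tr p q) (hp : Idle Tr p X) : Idle Tr q X := by
  refine ⟨h.stable hp.1, fun a ha => ?_⟩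
  rintro ⟨q', hq⟩
  obtain ⟨p', hp', -⟩ := h.symm.exists_step hq
  exact hp.2 a ha ⟨p', hp'⟩

/-- The witnessing relation relates `θ_X p` to `θ_X q` for `p ~ q`, and otherwise is `~` itself:
a `τ`-step of `θ_X p` stays under `θ_X`, every other step leaves it. -/
theorem sbis.theta {theta : Set A → S → S} (htheta : ThetaSem Tr theta) {p q : S} (X : Set A)
    (h : sbis Tr p q) : sbis Tr (theta X p) (theta X q) := by
  refine ⟨fun u v => (∃ X p q, sbis Tr p q ∧ u = theta X p ∧ v = theta X q) ∨ sbis Tr u v,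
    ⟨?_, ?_⟩, .inl ⟨X, p, q, h, rfl, rfl⟩⟩
  · rintro u v (⟨X, p, q, h, rfl, rfl⟩ | h)
    · exact .inl ⟨X, q, p, h.symm, rfl, rfl⟩
    · exact .inr h.symm
  · rintro u v α u' (⟨X, p, q, h, rfl, rfl⟩ | h) hu
    · rcases (htheta X p α u').1 hu with
        ⟨rfl, p', hp, rfl⟩ | ⟨a, rfl, haX, hp⟩ | ⟨hidle, hp⟩
      · obtain ⟨q', hq, hs⟩ := h.exists_step hp
        exact ⟨theta X q', (htheta X q _ _).2 (.inl ⟨rfl, q', hq, rfl⟩),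
          .inl ⟨X, p', q', hs, rfl, rfl⟩⟩
      · obtain ⟨q', hq, hs⟩ := h.exists_step hp
        exact ⟨q', (htheta X q _ _).2 (.inr (.inl ⟨a, rfl, haX, hq⟩)), .inr hs⟩
      · obtain ⟨q', hq, hs⟩ := h.exists_step hp
        exact ⟨q', (htheta X q _ _).2 (.inr (.inr ⟨h.idle hidle, hq⟩)), .inr hs⟩
    · obtain ⟨q', hq, hs⟩ := h.exists_step hu
      exact ⟨q', hq, .inr hs⟩

end StrongBisimilarity

section UpToStrongBisimilarity

variable {S A : Type} {Tr : S → Act A → S → Prop} {B : S → S → Prop}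

theorem UpToS.of_rel {p q : S} (h : B p q) : UpToS Tr B p q :=
  ⟨p, q, .refl p, h, .refl q⟩

theorem UpToS.sbis_comp_comp_sbis {p p₀ q₀ q : S} (hp : sbis Tr p p₀) (h : UpToS Tr B p₀ q₀)
    (hq : sbis Tr q₀ q) : UpToS Tr B p q := by
  obtain ⟨a, b, ha, hab, hb⟩ := h
  exact ⟨a, b, hp.trans ha, hab, hb.trans hq⟩

theorem CBTB.cbtbUptoS {theta : Set A → S → S} (hB : CBTB Tr theta B) :
    CBTBuptoS Tr theta B := by
  obtain ⟨hsymm, htrans, htimeout, hstable⟩ := hB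
  refine ⟨hsymm, ?_, ?_, hstable⟩
  · intro p q α p' hpq hα hp
    obtain ⟨q1, q2, hpath, hstep, h1, h2⟩ := htrans hpq hα hp
    exact ⟨q1, q2, hpath, hstep, .of_rel h1, .of_rel h2⟩
  · intro p q X p' hpq hidle hp
    obtain ⟨q1, q2, hpath, hstep, h⟩ := htimeout X hpq hidle hp
    exact ⟨q1, q2, hpath, hstep, .of_rel h⟩

theorem CBTBuptoS.cbtb_upToS {theta : Set A → S → S} (htheta : ThetaSem Tr theta)
    (hB : CBTBuptoS Tr theta B) : CBTB Tr theta (UpToS Tr B) := by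
  obtain ⟨hsymm, htrans, htimeout, hstable⟩ := hB
  refine ⟨?_, ?_, ?_, ?_⟩
  · rintro p q ⟨a, b, ha, hab, hb⟩
    exact ⟨b, a, hb.symm, hsymm hab, ha.symm⟩
  · rintro p q α p' ⟨a, b, ha, hab, hb⟩ hα hp
    obtain ⟨a', ha', hpa⟩ := ha.exists_step hp
    obtain ⟨q1, q2, hpath, hstep, h1, h2⟩ := htrans hab hα ha'
    obtain ⟨q1', hpath', hq1⟩ := hb.exists_tauPath hpath
    rcases hstep with ⟨rfl, rfl⟩ | hstep
    · exact ⟨q1', q1', hpath', .inl ⟨rfl, rfl⟩,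
        h1.sbis_comp_comp_sbis ha hq1, h2.sbis_comp_comp_sbis hpa hq1⟩
    · obtain ⟨q2', hstep', hq2⟩ := hq1.exists_step hstep
      exact ⟨q1', q2', hpath', .inr hstep',
        h1.sbis_comp_comp_sbis ha hq1, h2.sbis_comp_comp_sbis hpa hq2⟩
  · rintro p q X p' ⟨a, b, ha, hab, hb⟩ hidle hp
    obtain ⟨a', ha', hpa⟩ := ha.exists_step hp
    obtain ⟨q1, q2, hpath, hstep, h⟩ := htimeout X hab (ha.idle hidle) ha'
    obtain ⟨q1', hpath', hq1⟩ := hb.exists_tauPath hpath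
    obtain ⟨q2', hstep', hq2⟩ := hq1.exists_step hstep
    exact ⟨q1', q2', hpath', hstep',
      h.sbis_comp_comp_sbis (hpa.theta htheta X) (hq2.theta htheta X)⟩
  · rintro p q ⟨a, b, ha, hab, hb⟩ hp
    obtain ⟨q0, hpath, hq0⟩ := hstable hab (ha.stable hp)
    obtain ⟨q0', hpath', hq⟩ := hb.exists_tauPath hpath
    exact ⟨q0', hpath', hq.stable hq0⟩

end UpToStrongBisimilarity

/-- Soundness of bisimulation up to strong bisimilarity. -/
theorem stmt9 {C A : Type} (Tr : C → Act A → C → Prop) (theta : Set A → C → C)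
    (htheta : ThetaSem Tr theta) :
    (∀ P Q : C, BisT Tr theta P Q ↔ ∃ B, CBTBuptoS Tr theta B ∧ B P Q) ∧
    (∀ B : C → C → Prop, CBTBuptoS Tr theta B → CBTB Tr theta (UpToS Tr B)) := by
  refine ⟨fun P Q => ⟨?_, ?_⟩, fun B hB => hB.cbtb_upToS htheta⟩
  · rintro ⟨B, hB, hPQ⟩
    exact ⟨B, hB.cbtbUptoS, hPQ⟩
  · rintro ⟨B, hB, hPQ⟩
    exact ⟨UpToS Tr B, hB.cbtb_upToS htheta, .of_rel hPQ⟩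
end

section
/- The law Lτ is sound for rooted concrete branching reactive bisimilarity: for all processes P and Q, tau.P + t.Q is rooted concrete branching reactive bisimilar to tau.P. -/
/-- A rooted concrete branching reactive bisimulation. -/
structure RCBRB {S A : Type} (Tr : S → Act A → S → Prop)
    (Rp : S → S → Prop) (Rt : S → Set A → S → Prop) : Prop where
  symm_p : ∀ {P Q}, Rp P Q → Rp Q P
  symm_t : ∀ {P X Q}, Rt P X Q → Rt Q X P
  r1a : ∀ {P Q α P'}, Rp P Q → α ≠ Act.to → Tr P α P' →
    ∃ Q', Tr Q α Q' ∧ Bis Tr P' Q'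
  r1b : ∀ {P Q} (Y : Set A), Rp P Q → Rt P Y Q
  r2a : ∀ {P X Q P'}, Rt P X Q → Tr P Act.tau P' →
    ∃ Q', Tr Q Act.tau Q' ∧ BisX Tr P' X Q'
  r2b : ∀ {P X Q a P'}, Rt P X Q → a ∈ X → Tr P (Act.vis a) P' →
    ∃ Q', Tr Q (Act.vis a) Q' ∧ Bis Tr P' Q'
  r2c : ∀ {P X Q}, Rt P X Q → Idle Tr P X → Rp P Q
  r2d : ∀ {P X Q P'}, Rt P X Q → Idle Tr P X → Tr P Act.to P' →
    ∃ Q', Tr Q Act.to Q' ∧ BisX Tr P' X Q'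

/-- Rooted concrete branching reactive bisimilarity. -/
def RBis {S A : Type} (Tr : S → Act A → S → Prop) (P Q : S) : Prop :=
  ∃ Rp Rt, RCBRB Tr Rp Rt ∧ Rp P Q

/-- Semantics of action prefixing: `α.P -β-> Q` iff `β = α` and `Q = P`. -/
def PrefixSem {C A : Type} (Tr : C → Act A → C → Prop) (pre : Act A → C → C) : Prop :=
  ∀ (α : Act A) (P : C) (β : Act A) (Q : C), Tr (pre α P) β Q ↔ β = α ∧ Q = P

/-- Semantics of choice: `P + Q -α-> R` iff `P -α-> R` or `Q -α-> R`. -/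
def ChoiceSem {C A : Type} (Tr : C → Act A → C → Prop) (plus : C → C → C) : Prop :=
  ∀ (P Q : C) (α : Act A) (R : C), Tr (plus P Q) α R ↔ Tr P α R ∨ Tr Q α R

/-! The proof relates `τ.P + t.Q` to `τ.P` and every process to itself. Both root processes have
exactly the same `A ∪ {τ}`-transitions, and both can do a `τ`, so neither is ever idle in any
environment: the time-out transition of `τ.P + t.Q` never has to be matched. -/

section

variable {S A : Type} (Tr : S → Act A → S → Prop)

theorem CBRB.eq_s11 : CBRB Tr (· = ·) (fun p _ q => p = q) where
  symm_p := Eq.symm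
  symm_t := Eq.symm
  c1a := fun {_ _ _ P'} h _ hT => ⟨_, P', .refl, .inr (h ▸ hT), h, rfl⟩
  c1b := fun _ h => h
  c2a := fun {_ _ _ P'} h hT => ⟨_, P', .refl, .inr (h ▸ hT), h, rfl⟩
  c2b := fun {_ _ _ _ P'} h _ hT => ⟨_, P', .refl, h ▸ hT, h, rfl⟩
  c2c := fun h _ => ⟨_, .refl, h⟩
  c2d := fun {_ _ _ P'} h _ hT => ⟨_, P', .refl, h ▸ hT, rfl⟩
  c2e := fun h hS => ⟨_, .refl, h ▸ hS⟩

theorem Bis.refl (P : S) : Bis Tr P P := ⟨_, _, CBRB.eq_s11 Tr, rfl⟩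

theorem BisX.refl (P : S) (X : Set A) : BisX Tr P X P := ⟨_, _, CBRB.eq_s11 Tr, rfl⟩

theorem RBis.of_step_iff_of_not_stable {L R : S}
    (hstep : ∀ α, α ≠ Act.to → ∀ P', Tr L α P' ↔ Tr R α P') (hL : ¬ Stable Tr L) :
    RBis Tr L R := by
  let Rel : S → S → Prop := fun x y => x = y ∨ (x = L ∧ y = R) ∨ (x = R ∧ y = L)
  have rel_symm : ∀ {x y}, Rel x y → Rel y x := by
    rintro x y (rfl | ⟨rfl, rfl⟩ | ⟨rfl, rfl⟩)
    exacts [.inl rfl, .inr (.inr ⟨rfl, rfl⟩), .inr (.inl ⟨rfl, rfl⟩)]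
  have rel_step : ∀ {x y α x'}, Rel x y → α ≠ Act.to → Tr x α x' → Tr y α x' := by
    rintro x y α x' (rfl | ⟨rfl, rfl⟩ | ⟨rfl, rfl⟩) hα hT
    exacts [hT, (hstep α hα x').1 hT, (hstep α hα x').2 hT]
  have hR : ¬ Stable Tr R := fun hS =>
    hL fun ⟨P', hT⟩ => hS ⟨P', (hstep Act.tau nofun P').1 hT⟩
  have rel_idle : ∀ {x y X}, Rel x y → Idle Tr x X → x = y := by
    rintro x y X (rfl | ⟨rfl, rfl⟩ | ⟨rfl, rfl⟩) hI
    exacts [rfl, absurd hI.1 hL, absurd hI.1 hR]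
  refine ⟨Rel, fun x _ y => Rel x y, ⟨rel_symm, rel_symm, ?_, fun _ h => h, ?_, ?_,
    fun h _ => h, ?_⟩, .inr (.inl ⟨rfl, rfl⟩)⟩
  · exact fun h hα hT => ⟨_, rel_step h hα hT, Bis.refl Tr _⟩
  · exact fun h hT => ⟨_, rel_step h nofun hT, BisX.refl Tr _ _⟩
  · exact fun h _ hT => ⟨_, rel_step h nofun hT, Bis.refl Tr _⟩
  · intro x X y x' h hI hT
    cases rel_idle h hI
    exact ⟨x', hT, BisX.refl Tr _ _⟩

end

/-- Soundness of the law Lτ: `tau.P + t.Q ~r tau.P`. -/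
theorem stmt11 {C A : Type} (Tr : C → Act A → C → Prop)
    (pre : Act A → C → C) (plus : C → C → C)
    (hpre : PrefixSem Tr pre) (hplus : ChoiceSem Tr plus)
    (P Q : C) :
    RBis Tr (plus (pre Act.tau P) (pre Act.to Q)) (pre Act.tau P) := by
  have hstep : ∀ α, α ≠ Act.to → ∀ P',
      Tr (plus (pre Act.tau P) (pre Act.to Q)) α P' ↔ Tr (pre Act.tau P) α P' := by
    intro α hα P'
    simp only [hplus _ _ α P', hpre _ _ α P', or_iff_left_iff_imp, and_imp]
    exact fun h _ => absurd h hα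
  refine RBis.of_step_iff_of_not_stable Tr hstep fun hS => hS ⟨P, ?_⟩
  exact (hstep Act.tau nofun P).2 ((hpre _ _ _ _).2 ⟨rfl, rfl⟩)
end

section
/- The branching axiom is sound for rooted concrete branching reactive bisimilarity: for all processes P and Q and every action α ∈ A ∪ {tau, t}, the process α.(tau.(P+Q) + P) is rooted concrete branching reactive bisimilar to α.(P+Q). -/
/-
A τ-step `L -τ-> R` after which every other move of `L` is still possible is inert: the relation
identifying `L` with `R` (plus the identity) is a concrete branching reactive bisimulation, since
every move of `R` is answered by `L` through that τ-step and every move of `L` is answered by `R`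
directly or, for the τ-step itself, by standing still. With `L = tau.(P+Q) + P` and `R = P+Q` this
gives `L ~ R`, and prefixing both sides by `α` turns `~` into `~r`.
-/

variable {S A : Type} {Tr : S → Act A → S → Prop}

lemma OptStep.tr_of_ne_tau {α : Act A} {p q : S} (h : OptStep Tr α p q) (hα : α ≠ Act.tau) :
    Tr p α q :=
  h.resolve_left fun h' => hα h'.1

lemma Bis.symm {P Q : S} : Bis Tr P Q → Bis Tr Q P
  | ⟨_, _, hR, hPQ⟩ => ⟨_, _, hR, hR.symm_p hPQ⟩

lemma Bis.bisX {P Q : S} (X : Set A) : Bis Tr P Q → BisX Tr P X Q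
  | ⟨_, _, hR, hPQ⟩ => ⟨_, _, hR, hR.c1b X hPQ⟩

def EqOrPair (L R : S) (p q : S) : Prop :=
  p = q ∨ (p = L ∧ q = R) ∨ (p = R ∧ q = L)

lemma EqOrPair.symm {L R p q : S} : EqOrPair L R p q → EqOrPair L R q p := by
  rintro (rfl | ⟨rfl, rfl⟩ | ⟨rfl, rfl⟩)
  · exact Or.inl rfl
  · exact Or.inr (Or.inr ⟨rfl, rfl⟩)
  · exact Or.inr (Or.inl ⟨rfl, rfl⟩)

section InertTau

variable {L R : S} (hLR : Tr L Act.tau R)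
include hLR

lemma tauPath_of_stable {p q : S} (hpq : EqOrPair L R p q) (hp : Stable Tr p) :
    TauPath Tr q p := by
  rcases hpq with rfl | ⟨rfl, rfl⟩ | ⟨rfl, rfl⟩
  · exact .refl
  · exact absurd ⟨q, hLR⟩ hp
  · exact .single hLR

variable (hL : ∀ β x, Tr L β x → (β = Act.tau ∧ x = R) ∨ Tr R β x)
include hL

lemma exists_match_of_inert_tau {p q p' : S} {β : Act A} (hpq : EqOrPair L R p q)
    (hp : Tr p β p') :
    ∃ q1 q2, TauPath Tr q q1 ∧ OptStep Tr β q1 q2 ∧ EqOrPair L R p q1 ∧ EqOrPair L R p' q2 := by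
  rcases hpq with rfl | ⟨rfl, rfl⟩ | ⟨rfl, rfl⟩
  · exact ⟨p, p', .refl, Or.inr hp, Or.inl rfl, Or.inl rfl⟩
  · rcases hL β p' hp with ⟨rfl, rfl⟩ | hR
    · exact ⟨p', p', .refl, Or.inl ⟨rfl, rfl⟩, Or.inr (Or.inl ⟨rfl, rfl⟩), Or.inl rfl⟩
    · exact ⟨q, p', .refl, Or.inr hR, Or.inr (Or.inl ⟨rfl, rfl⟩), Or.inl rfl⟩
  · exact ⟨p, p', .single hLR, Or.inr hp, Or.inl rfl, Or.inl rfl⟩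

lemma cbrb_of_inert_tau : CBRB Tr (EqOrPair L R) (fun p _ q => EqOrPair L R p q) := by
  refine ⟨EqOrPair.symm, EqOrPair.symm, fun hpq _ hp => exists_match_of_inert_tau hLR hL hpq hp,
    fun _ h => h, fun hpq hp => exists_match_of_inert_tau hLR hL hpq hp, ?_,
    fun hpq hidle => ⟨_, tauPath_of_stable hLR hpq hidle.1, Or.inl rfl⟩, ?_,
    fun hpq hp => ⟨_, tauPath_of_stable hLR hpq hp, hp⟩⟩
  · intro p X q a p' hpq _ hp
    obtain ⟨q1, q2, hq, hq12, h1, h2⟩ := exists_match_of_inert_tau hLR hL hpq hp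
    exact ⟨q1, q2, hq, hq12.tr_of_ne_tau (by simp), h1, h2⟩
  · intro p X q p' hpq _ hp
    obtain ⟨q1, q2, hq, hq12, -, h2⟩ := exists_match_of_inert_tau hLR hL hpq hp
    exact ⟨q1, q2, hq, hq12.tr_of_ne_tau (by simp), h2⟩

lemma bis_of_inert_tau : Bis Tr L R :=
  ⟨_, _, cbrb_of_inert_tau hLR hL, Or.inr (Or.inl ⟨rfl, rfl⟩)⟩

end InertTau

section Prefix

variable {C : Type} {Tr : C → Act A → C → Prop} {pre : Act A → C → C}

lemma PrefixSem.step_match (hpre : PrefixSem Tr pre) {α β : Act A} {u u' : C}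
    (h : Tr (pre α u) β u') (v : C) : u' = u ∧ Tr (pre α v) β v := by
  obtain ⟨rfl, rfl⟩ := (hpre _ _ _ _).1 h
  exact ⟨rfl, (hpre _ _ _ _).2 ⟨rfl, rfl⟩⟩

lemma rbis_pre_of_bis (hpre : PrefixSem Tr pre) (α : Act A) {u v : C} (huv : Bis Tr u v) :
    RBis Tr (pre α u) (pre α v) := by
  let Rel : C → C → Prop := fun x y => ∃ u v, Bis Tr u v ∧ x = pre α u ∧ y = pre α v
  have symm : ∀ {x y}, Rel x y → Rel y x := fun ⟨u, v, h, hx, hy⟩ => ⟨v, u, h.symm, hy, hx⟩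
  have answer : ∀ {x y β x'}, Rel x y → Tr x β x' → ∃ y', Tr y β y' ∧ Bis Tr x' y' := by
    rintro x y β x' ⟨u, v, huv, rfl, rfl⟩ hx
    obtain ⟨rfl, hv⟩ := hpre.step_match hx v
    exact ⟨v, hv, huv⟩
  have answerX : ∀ {x y β x'} (X : Set A), Rel x y → Tr x β x' →
      ∃ y', Tr y β y' ∧ BisX Tr x' X y' := fun X hxy hx =>
    let ⟨y', hy, h⟩ := answer hxy hx
    ⟨y', hy, h.bisX X⟩
  exact ⟨Rel, fun x _ y => Rel x y,
    ⟨symm, symm, fun hxy _ hx => answer hxy hx, fun _ h => h, fun hxy hx => answerX _ hxy hx,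
      fun hxy _ hx => answer hxy hx, fun hxy _ => hxy, fun hxy _ hx => answerX _ hxy hx⟩,
    u, v, huv, rfl, rfl⟩

end Prefix

/-- Soundness of the branching axiom: `α.(tau.(P+Q) + P) ~r α.(P+Q)`. -/
theorem stmt12 {C A : Type} (Tr : C → Act A → C → Prop)
    (pre : Act A → C → C) (plus : C → C → C)
    (hpre : PrefixSem Tr pre) (hplus : ChoiceSem Tr plus)
    (P Q : C) (α : Act A) :
    RBis Tr (pre α (plus (pre Act.tau (plus P Q)) P)) (pre α (plus P Q)) := by
  refine rbis_pre_of_bis hpre α (bis_of_inert_tau ?_ ?_)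
  · exact (hplus _ _ _ _).2 (Or.inl ((hpre _ _ _ _).2 ⟨rfl, rfl⟩))
  · intro β x hx
    rcases (hplus _ _ _ _).1 hx with hτ | hP
    · exact Or.inl ((hpre _ _ _ _).1 hτ)
    · exact Or.inr ((hplus _ _ _ _).2 (Or.inl hP))
end

section
/- Modal characterisation (completeness direction): if the LTS is image-finite-enough for the logic to distinguish classes (formally: the logic L^c_b is closed under arbitrary conjunction and negation), then the relation ≡ := {(P,Q) | ∀φ ∈ L^c_b, P ⊨ φ ⇔ Q ⊨ φ} ∪ {(P,X,Q) | ∀φ ∈ L^c_b, P ⊨_X φ ⇔ Q ⊨_X φ} is a generalised concrete branching reactive bisimulation; hence logical equivalence with respect to L^c_b implies concrete branching reactive bisimilarity. -/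
structure GCBRB {S A : Type} (Tr : S → Act A → S → Prop)
    (Rp : S → S → Prop) (Rt : S → Set A → S → Prop) : Prop where
  symm_p : ∀ {P Q}, Rp P Q → Rp Q P
  symm_t : ∀ {P X Q}, Rt P X Q → Rt Q X P
  g1a : ∀ {P Q α P'}, Rp P Q → α ≠ Act.to → Tr P α P' →
    ∃ Q1 Q2, TauPath Tr Q Q1 ∧ OptStep Tr α Q1 Q2 ∧ Rp P Q1 ∧ Rp P' Q2
  g1b : ∀ {P Q X P'}, Rp P Q → Idle Tr P X → Tr P Act.to P' →
    ∃ Q1 Q2, TauPath Tr Q Q1 ∧ Tr Q1 Act.to Q2 ∧ Rt P' X Q2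
  g1c : ∀ {P Q}, Rp P Q → Stable Tr P → ∃ Q0, TauPath Tr Q Q0 ∧ Stable Tr Q0
  g2a : ∀ {P X Q P'}, Rt P X Q → Tr P Act.tau P' →
    ∃ Q1 Q2, TauPath Tr Q Q1 ∧ OptStep Tr Act.tau Q1 Q2 ∧ Rt P X Q1 ∧ Rt P' X Q2
  g2b : ∀ {P X Q a P'}, Rt P X Q → (a ∈ X ∨ Idle Tr P X) → Tr P (Act.vis a) P' →
    ∃ Q1 Q2, TauPath Tr Q Q1 ∧ Tr Q1 (Act.vis a) Q2 ∧ Rt P X Q1 ∧ Rp P' Q2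
  g2c : ∀ {P X Q P'} (Y : Set A), Rt P X Q → Idle Tr P (X ∪ Y) → Tr P Act.to P' →
    ∃ Q1 Q2, TauPath Tr Q Q1 ∧ Tr Q1 Act.to Q2 ∧ Rt P' Y Q2
  g2d : ∀ {P X Q}, Rt P X Q → Stable Tr P → ∃ Q0, TauPath Tr Q Q0 ∧ Stable Tr Q0

/-- Formulas of the class `L^c_b`: `⊤`, arbitrary conjunctions, negation,
`⟨ε⟩(φ ∧ ⟨α̂⟩φ')` for `α ∈ A ∪ {tau}` (with `none` standing for `tau`),
`⟨ε⟩⟨X⟩φ`, and `⟨ε⟩¬⟨tau⟩⊤`. -/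
inductive Fm (A : Type) : Type 1 where
  | top : Fm A
  | conj (I : Type) (f : I → Fm A) : Fm A
  | neg (φ : Fm A) : Fm A
  | dia (a : Option A) (φ φ' : Fm A) : Fm A
  | diaX (X : Set A) (φ : Fm A) : Fm A
  | stab : Fm A

/-- Satisfaction `P ⊨ φ` (environment `none`, i.e. a triggered environment) and
`P ⊨_Y φ` (environment `some Y`). -/
def Sat {C A : Type} (Tr : C → Act A → C → Prop) :
    Fm A → Option (Set A) → C → Prop
  | .top, _, _ => True
  | .conj _ f, e, P => ∀ i, Sat Tr (f i) e P
  | .neg φ, e, P => ¬ Sat Tr φ e P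
  | .dia none φ φ', e, P =>
      ∃ P1, TauPath Tr P P1 ∧ Sat Tr φ e P1 ∧
        (Sat Tr φ' e P1 ∨ ∃ P2, Tr P1 Act.tau P2 ∧ Sat Tr φ' e P2)
  | .dia (some a) φ φ', e, P =>
      ∃ P1 P2, TauPath Tr P P1 ∧ Sat Tr φ e P1 ∧
        (∀ Y ∈ e, a ∈ Y ∨ Idle Tr P1 Y) ∧
        Tr P1 (Act.vis a) P2 ∧ Sat Tr φ' none P2
  | .diaX X φ, e, P =>
      ∃ P1 P2, TauPath Tr P P1 ∧
        Idle Tr P1 (match e with | none => X | some Y => X ∪ Y) ∧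
        Tr P1 Act.to P2 ∧ Sat Tr φ (some X) P2
  | .stab, _, P => ∃ P0, TauPath Tr P P0 ∧ Stable Tr P0

/-! Logical equivalence matches every move because `L^c_b` has arbitrary conjunctions and
negation: if no answer of `Q` to a move of `P` led to equivalent states, conjoining one
distinguishing formula per candidate answer would give a single modal formula true at `P` and
false at `Q`. A generalised bisimulation becomes a concrete one once the triples whose two states
are both idle in the environment are also admitted as pairs. -/

section LogicalEquivalence

variable {C A : Type} {Tr : C → Act A → C → Prop}

def LogEquiv (Tr : C → Act A → C → Prop) (e : Option (Set A)) (P Q : C) : Prop :=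
  ∀ φ : Fm A, Sat Tr φ e P ↔ Sat Tr φ e Q

theorem LogEquiv.symm {e : Option (Set A)} {P Q : C} (h : LogEquiv Tr e P Q) :
    LogEquiv Tr e Q P :=
  fun φ => (h φ).symm

theorem exists_sat_not_sat_of_not_logEquiv {e : Option (Set A)} {P Q : C}
    (h : ¬ LogEquiv Tr e P Q) : ∃ φ : Fm A, Sat Tr φ e P ∧ ¬ Sat Tr φ e Q := by
  by_contra! hc
  refine h fun φ => ⟨hc φ, fun hQ => by_contra fun hP => ?_⟩
  exact hc (.neg φ) ((Sat.eq_3 ..).mpr hP) hQ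

theorem exists_sat_forall_not_sat {e : Option (Set A)} {P : C} (Cand : C → Prop)
    (h : ∀ Q, Cand Q → ¬ LogEquiv Tr e P Q) :
    ∃ φ : Fm A, Sat Tr φ e P ∧ ∀ Q, Cand Q → ¬ Sat Tr φ e Q := by
  choose f hfP hfQ using fun Q : {Q // Cand Q} => exists_sat_not_sat_of_not_logEquiv (h Q Q.2)
  refine ⟨.conj _ f, (Sat.eq_2 ..).mpr hfP, fun Q hQ hsat => hfQ ⟨Q, hQ⟩ ?_⟩
  exact (Sat.eq_2 .. ▸ hsat) ⟨Q, hQ⟩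

/-- `φ` rules out the candidates whose first component is inequivalent to `P`, and `φ'` the
second components of the remaining ones. -/
theorem exists_sat_forall_not_sat₂ {e e' : Option (Set A)} {P P' : C} (Cand : C → C → Prop)
    (h : ∀ Q Q', Cand Q Q' → LogEquiv Tr e P Q → ¬ LogEquiv Tr e' P' Q') :
    ∃ φ φ' : Fm A, Sat Tr φ e P ∧ Sat Tr φ' e' P' ∧
      ∀ Q Q', Cand Q Q' → Sat Tr φ e Q → ¬ Sat Tr φ' e' Q' := by
  obtain ⟨φ, hφP, hφ⟩ := exists_sat_forall_not_sat (Tr := Tr) (e := e) (P := P)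
    (fun Q => ∃ Q', Cand Q Q' ∧ ¬ LogEquiv Tr e P Q) fun _ ⟨_, _, hQ⟩ => hQ
  obtain ⟨φ', hφ'P', hφ'⟩ := exists_sat_forall_not_sat (Tr := Tr) (e := e') (P := P')
    (fun Q' => ∃ Q, Cand Q Q' ∧ LogEquiv Tr e P Q) fun _ ⟨_, hc, hQ⟩ => h _ _ hc hQ
  refine ⟨φ, φ', hφP, hφ'P', fun Q Q' hc hφQ => ?_⟩
  by_cases hQ : LogEquiv Tr e P Q
  · exact hφ' Q' ⟨Q, hc, hQ⟩
  · exact absurd hφQ (hφ Q ⟨Q', hc, hQ⟩)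

theorem LogEquiv.exists_tau_match {e : Option (Set A)} {P Q P' : C}
    (h : LogEquiv Tr e P Q) (hstep : Tr P Act.tau P') :
    ∃ Q1 Q2, TauPath Tr Q Q1 ∧ OptStep Tr Act.tau Q1 Q2 ∧
      LogEquiv Tr e P Q1 ∧ LogEquiv Tr e P' Q2 := by
  by_contra! hcon
  obtain ⟨φ, φ', hφ, hφ', hsep⟩ := exists_sat_forall_not_sat₂
    (fun Q1 Q2 => TauPath Tr Q Q1 ∧ OptStep Tr Act.tau Q1 Q2) fun Q1 Q2 hc => hcon Q1 Q2 hc.1 hc.2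
  have hsat : Sat Tr (.dia none φ φ') e Q :=
    (h _).1 ⟨P, .refl, hφ, .inr ⟨P', hstep, hφ'⟩⟩
  obtain ⟨Q1, hpath, hφQ1, hQ1 | ⟨Q2, hstep', hQ2⟩⟩ := hsat
  · exact hsep Q1 Q1 ⟨hpath, .inl ⟨rfl, rfl⟩⟩ hφQ1 hQ1
  · exact hsep Q1 Q2 ⟨hpath, .inr hstep'⟩ hφQ1 hQ2

theorem LogEquiv.exists_vis_match {e : Option (Set A)} {P Q P' : C} {a : A}
    (h : LogEquiv Tr e P Q) (henv : ∀ Y ∈ e, a ∈ Y ∨ Idle Tr P Y)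
    (hstep : Tr P (Act.vis a) P') :
    ∃ Q1 Q2, TauPath Tr Q Q1 ∧ Tr Q1 (Act.vis a) Q2 ∧
      LogEquiv Tr e P Q1 ∧ LogEquiv Tr none P' Q2 := by
  by_contra! hcon
  obtain ⟨φ, φ', hφ, hφ', hsep⟩ := exists_sat_forall_not_sat₂
    (fun Q1 Q2 => TauPath Tr Q Q1 ∧ Tr Q1 (Act.vis a) Q2) fun Q1 Q2 hc => hcon Q1 Q2 hc.1 hc.2
  have hsat : Sat Tr (.dia (some a) φ φ') e Q :=
    (h _).1 ⟨P, P', .refl, hφ, henv, hstep, hφ'⟩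
  obtain ⟨Q1, Q2, hpath, hφQ1, -, hstep', hQ2⟩ := hsat
  exact hsep Q1 Q2 ⟨hpath, hstep'⟩ hφQ1 hQ2

theorem LogEquiv.exists_timeout_match {e : Option (Set A)} {X : Set A} {P Q P' : C}
    (h : LogEquiv Tr e P Q) (hidle : Idle Tr P (e.elim X (X ∪ ·))) (hstep : Tr P Act.to P') :
    ∃ Q1 Q2, TauPath Tr Q Q1 ∧ Tr Q1 Act.to Q2 ∧ LogEquiv Tr (some X) P' Q2 := by
  by_contra! hcon
  obtain ⟨φ, hφ, hsep⟩ := exists_sat_forall_not_sat (Tr := Tr) (e := some X) (P := P')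
    (fun Q2 => ∃ Q1, TauPath Tr Q Q1 ∧ Tr Q1 Act.to Q2) fun Q2 ⟨Q1, hp, hs⟩ => hcon Q1 Q2 hp hs
  have hsatP : Sat Tr (.diaX X φ) e P := by
    cases e <;> exact ⟨P, P', .refl, hidle, hstep, hφ⟩
  obtain ⟨Q1, Q2, hpath, -, hstep', hQ2⟩ := (h _).1 hsatP
  exact hsep Q2 ⟨Q1, hpath, hstep'⟩ hQ2

theorem LogEquiv.exists_stable_match {e : Option (Set A)} {P Q : C}
    (h : LogEquiv Tr e P Q) (hP : Stable Tr P) : ∃ Q0, TauPath Tr Q Q0 ∧ Stable Tr Q0 :=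
  (h .stab).1 ⟨P, .refl, hP⟩

theorem logEquiv_isGCBRB :
    GCBRB Tr (LogEquiv Tr none) (fun P X Q => LogEquiv Tr (some X) P Q) where
  symm_p h := h.symm
  symm_t h := h.symm
  g1a {_ _ α _} h hα hstep := by
    rcases α with a | _ | _
    · obtain ⟨Q1, Q2, hpath, hstep', h1, h2⟩ := h.exists_vis_match (by simp) hstep
      exact ⟨Q1, Q2, hpath, .inr hstep', h1, h2⟩
    · exact h.exists_tau_match hstep
    · exact absurd rfl hα
  g1b h hidle hstep := h.exists_timeout_match hidle hstep
  g1c h hP := h.exists_stable_match hP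
  g2a h hstep := h.exists_tau_match hstep
  g2b h ha hstep := h.exists_vis_match (by simpa using ha) hstep
  g2c _ h hidle hstep := h.exists_timeout_match (by simpa [Set.union_comm] using hidle) hstep
  g2d h hP := h.exists_stable_match hP

end LogicalEquivalence

section Generalised

variable {S A : Type} {Tr : S → Act A → S → Prop}

theorem TauPath.eq_of_stable_s16 {P P1 : S} (hP : Stable Tr P) (h : TauPath Tr P P1) : P = P1 := by
  rcases Relation.ReflTransGen.cases_head h with rfl | ⟨P', hstep, -⟩
  · rfl
  · exact absurd ⟨P', hstep⟩ hP

theorem OptStep.eq_of_stable_s16 {P P1 : S} (hP : Stable Tr P) (h : OptStep Tr Act.tau P P1) :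
    P = P1 := by
  rcases h with ⟨-, rfl⟩ | hstep
  · rfl
  · exact absurd ⟨P1, hstep⟩ hP

theorem Idle.union {P : S} {X Y : Set A} (hX : Idle Tr P X) (hY : Idle Tr P Y) :
    Idle Tr P (X ∪ Y) :=
  ⟨hX.1, fun a ha => ha.elim (hX.2 a) (hY.2 a)⟩

namespace GCBRB

variable {Rp : S → S → Prop} {Rt : S → Set A → S → Prop}

/-- Each tau-step on the right is matched on the stable left side by staying put. -/
theorem rt_of_tauPath (hG : GCBRB Tr Rp Rt) {P Q Q0 : S} {X : Set A} (hR : Rt P X Q)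
    (hP : Stable Tr P) (hpath : TauPath Tr Q Q0) : Rt P X Q0 := by
  induction hpath with
  | refl => exact hR
  | tail _ hstep ih =>
    obtain ⟨_, _, hpath', hopt, -, hR2⟩ := hG.g2a (hG.symm_t ih) hstep
    rw [← hpath'.eq_of_stable_s16 hP] at hopt
    rw [← hopt.eq_of_stable_s16 hP] at hR2
    exact hG.symm_t hR2

theorem idle_of_stable (hG : GCBRB Tr Rp Rt) {P Q : S} {X : Set A} (hR : Rt P X Q)
    (hP : Idle Tr P X) (hQ : Stable Tr Q) : Idle Tr Q X := by
  refine ⟨hQ, fun a ha ⟨Q', hstep⟩ => ?_⟩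
  obtain ⟨_, P2, hpath, hstep', -⟩ := hG.g2b (hG.symm_t hR) (.inl ha) hstep
  rw [← hpath.eq_of_stable_s16 hP.1] at hstep'
  exact hP.2 a ha ⟨P2, hstep'⟩

def IdlePair (Tr : S → Act A → S → Prop) (Rt : S → Set A → S → Prop) (P Q : S) : Prop :=
  ∃ X, Rt P X Q ∧ Idle Tr P X ∧ Idle Tr Q X

theorem IdlePair.symm (hG : GCBRB Tr Rp Rt) {P Q : S} (h : IdlePair Tr Rt P Q) :
    IdlePair Tr Rt Q P :=
  let ⟨X, hR, hP, hQ⟩ := h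
  ⟨X, hG.symm_t hR, hQ, hP⟩

theorem IdlePair.exists_vis_match (hG : GCBRB Tr Rp Rt) {P Q P' : S} {a : A}
    (h : IdlePair Tr Rt P Q) (hstep : Tr P (Act.vis a) P') :
    ∃ Q', Tr Q (Act.vis a) Q' ∧ Rp P' Q' := by
  obtain ⟨X, hR, hP, hQ⟩ := h
  obtain ⟨_, Q2, hpath, hstep', -, hR'⟩ := hG.g2b hR (.inr hP) hstep
  rw [← hpath.eq_of_stable_s16 hQ.1] at hstep'
  exact ⟨Q2, hstep', hR'⟩

def PairRel (Tr : S → Act A → S → Prop) (Rp : S → S → Prop) (Rt : S → Set A → S → Prop)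
    (P Q : S) : Prop :=
  Rp P Q ∨ IdlePair Tr Rt P Q

def TripleRel (Tr : S → Act A → S → Prop) (Rp : S → S → Prop) (Rt : S → Set A → S → Prop)
    (P : S) (X : Set A) (Q : S) : Prop :=
  Rt P X Q ∨ PairRel Tr Rp Rt P Q

theorem PairRel.symm (hG : GCBRB Tr Rp Rt) {P Q : S} (h : PairRel Tr Rp Rt P Q) :
    PairRel Tr Rp Rt Q P :=
  h.imp hG.symm_p (IdlePair.symm hG)

theorem PairRel.exists_match (hG : GCBRB Tr Rp Rt) {P Q P' : S} {α : Act A}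
    (h : PairRel Tr Rp Rt P Q) (hα : α ≠ Act.to) (hstep : Tr P α P') :
    ∃ Q1 Q2, TauPath Tr Q Q1 ∧ OptStep Tr α Q1 Q2 ∧
      PairRel Tr Rp Rt P Q1 ∧ PairRel Tr Rp Rt P' Q2 := by
  rcases h with h | h
  · obtain ⟨Q1, Q2, hpath, hopt, h1, h2⟩ := hG.g1a h hα hstep
    exact ⟨Q1, Q2, hpath, hopt, .inl h1, .inl h2⟩
  rcases α with a | _ | _
  · obtain ⟨Q', hstep', hR'⟩ := h.exists_vis_match hG hstep
    exact ⟨Q, Q', .refl, .inr hstep', .inr h, .inl hR'⟩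
  · obtain ⟨X, -, hP, -⟩ := h
    exact absurd ⟨P', hstep⟩ hP.1
  · exact absurd rfl hα

theorem TripleRel.exists_tau_match (hG : GCBRB Tr Rp Rt) {P Q P' : S} {X : Set A}
    (h : TripleRel Tr Rp Rt P X Q) (hstep : Tr P Act.tau P') :
    ∃ Q1 Q2, TauPath Tr Q Q1 ∧ OptStep Tr Act.tau Q1 Q2 ∧
      TripleRel Tr Rp Rt P X Q1 ∧ TripleRel Tr Rp Rt P' X Q2 := by
  rcases h with h | h
  · obtain ⟨Q1, Q2, hpath, hopt, h1, h2⟩ := hG.g2a h hstep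
    exact ⟨Q1, Q2, hpath, hopt, .inl h1, .inl h2⟩
  · obtain ⟨Q1, Q2, hpath, hopt, h1, h2⟩ := PairRel.exists_match hG h (by simp) hstep
    exact ⟨Q1, Q2, hpath, hopt, .inr h1, .inr h2⟩

theorem TripleRel.exists_vis_match (hG : GCBRB Tr Rp Rt) {P Q P' : S} {X : Set A} {a : A}
    (h : TripleRel Tr Rp Rt P X Q) (ha : a ∈ X) (hstep : Tr P (Act.vis a) P') :
    ∃ Q1 Q2, TauPath Tr Q Q1 ∧ Tr Q1 (Act.vis a) Q2 ∧
      TripleRel Tr Rp Rt P X Q1 ∧ PairRel Tr Rp Rt P' Q2 := by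
  rcases h with h | h
  · obtain ⟨Q1, Q2, hpath, hstep', h1, h2⟩ := hG.g2b h (.inl ha) hstep
    exact ⟨Q1, Q2, hpath, hstep', .inl h1, .inl h2⟩
  · obtain ⟨Q1, Q2, hpath, hopt | hstep', h1, h2⟩ := PairRel.exists_match hG h (by simp) hstep
    · exact nomatch hopt.1
    · exact ⟨Q1, Q2, hpath, hstep', .inr h1, h2⟩

theorem TripleRel.exists_idle_match (hG : GCBRB Tr Rp Rt) {P Q : S} {X : Set A}
    (h : TripleRel Tr Rp Rt P X Q) (hP : Idle Tr P X) :
    ∃ Q0, TauPath Tr Q Q0 ∧ PairRel Tr Rp Rt P Q0 := by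
  rcases h with h | h
  · obtain ⟨Q0, hpath, hQ0⟩ := hG.g2d h hP.1
    have hR0 : Rt P X Q0 := hG.rt_of_tauPath h hP.1 hpath
    exact ⟨Q0, hpath, .inr ⟨X, hR0, hP, hG.idle_of_stable hR0 hP hQ0⟩⟩
  · exact ⟨Q, .refl, h⟩

theorem TripleRel.exists_timeout_match (hG : GCBRB Tr Rp Rt) {P Q P' : S} {X : Set A}
    (h : TripleRel Tr Rp Rt P X Q) (hP : Idle Tr P X) (hstep : Tr P Act.to P') :
    ∃ Q1 Q2, TauPath Tr Q Q1 ∧ Tr Q1 Act.to Q2 ∧ TripleRel Tr Rp Rt P' X Q2 := by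
  suffices ∃ Q1 Q2, TauPath Tr Q Q1 ∧ Tr Q1 Act.to Q2 ∧ Rt P' X Q2 from
    let ⟨Q1, Q2, hpath, hstep', hR⟩ := this
    ⟨Q1, Q2, hpath, hstep', .inl hR⟩
  rcases h with h | h | ⟨X', h, hP', -⟩
  · exact hG.g2c X h (hP.union hP) hstep
  · exact hG.g1b h hP hstep
  · exact hG.g2c X h (hP'.union hP) hstep

theorem TripleRel.exists_stable_match (hG : GCBRB Tr Rp Rt) {P Q : S} {X : Set A}
    (h : TripleRel Tr Rp Rt P X Q) (hP : Stable Tr P) :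
    ∃ Q0, TauPath Tr Q Q0 ∧ Stable Tr Q0 := by
  rcases h with h | h | ⟨_, -, -, hQ⟩
  · exact hG.g2d h hP
  · exact hG.g1c h hP
  · exact ⟨Q, .refl, hQ.1⟩

theorem cbrb (hG : GCBRB Tr Rp Rt) : CBRB Tr (PairRel Tr Rp Rt) (TripleRel Tr Rp Rt) where
  symm_p := PairRel.symm hG
  symm_t h := h.imp hG.symm_t (PairRel.symm hG)
  c1a := PairRel.exists_match hG
  c1b _ := .inr
  c2a := TripleRel.exists_tau_match hG
  c2b := TripleRel.exists_vis_match hG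
  c2c := TripleRel.exists_idle_match hG
  c2d := TripleRel.exists_timeout_match hG
  c2e := TripleRel.exists_stable_match hG

theorem bis (hG : GCBRB Tr Rp Rt) {P Q : S} (h : Rp P Q) : Bis Tr P Q :=
  ⟨_, _, hG.cbrb, .inl h⟩

end GCBRB

end Generalised

/-- Modal characterisation, completeness direction: logical equivalence with respect to
`L^c_b` forms a generalised concrete branching reactive bisimulation; hence it implies
concrete branching reactive bisimilarity. -/
theorem stmt16 {C A : Type} (Tr : C → Act A → C → Prop) :
    GCBRB Tr
      (fun P Q => ∀ φ : Fm A, Sat Tr φ none P ↔ Sat Tr φ none Q)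
      (fun P X Q => ∀ φ : Fm A, Sat Tr φ (some X) P ↔ Sat Tr φ (some X) Q) ∧
    (∀ P Q : C, (∀ φ : Fm A, Sat Tr φ none P ↔ Sat Tr φ none Q) → Bis Tr P Q) :=
  ⟨logEquiv_isGCBRB, fun _ _ h => logEquiv_isGCBRB.bis h⟩
end
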